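/- arXiv:0704.2897 — 4 statements merged into one kernel-verified Lean document; each statement's English description precedes it below -/
import Mathlib

section
/- In any finite quotient of the Baumslag group G = ⟨a, t | (a^t)⁻¹ a (a^t) = a²⟩ (where a^t = t⁻¹ a t), the image of a is trivial. -/
/-- The single relator `(t⁻¹at)⁻¹ a (t⁻¹at) * (a²)⁻¹` of the Baumslag group,
with generators `a = FreeGroup.of 0`, `t = FreeGroup.of 1`. -/
def baumslagRels : Set (FreeGroup (Fin 2)) :=
  { ((FreeGroup.of 1)⁻¹ * FreeGroup.of 0 * FreeGroup.of 1)⁻¹ * FreeGroup.of 0 *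
      ((FreeGroup.of 1)⁻¹ * FreeGroup.of 0 * FreeGroup.of 1) * (FreeGroup.of 0 ^ 2)⁻¹ }

/-- The Baumslag group `G = ⟨a, t ∣ (aᵗ)⁻¹ a aᵗ = a²⟩`. -/
abbrev Baumslag : Type := PresentedGroup baumslagRels

noncomputable def bgA : Baumslag := PresentedGroup.of 0
noncomputable def bgT : Baumslag := PresentedGroup.of 1

/-! Let `x` and `c` be the images of `a` and `aᵗ` in a finite group. Since `c` is conjugate to `x`
it has the same order `n`, and since `c` conjugates `x ^ 2` to `x`, `c ^ k` conjugates `x ^ 2 ^ k`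
to `x`. Taking `k = n` gives `x ^ 2 ^ n = x`, that is `2 ^ n ≡ 1 [MOD n]`. This forces `n = 1`:
modulo the least prime factor `p` of `n`, the order of `2` divides `gcd n (p - 1) = 1`. -/

theorem Nat.eq_one_of_two_pow_modEq_one {n : ℕ} (hn : n ≠ 0) (h : 2 ^ n ≡ 1 [MOD n]) :
    n = 1 := by
  by_contra hn1
  set p := n.minFac
  have hp : p.Prime := Nat.minFac_prime hn1
  have : Fact p.Prime := ⟨hp⟩
  have h2n : (2 : ZMod p) ^ n = 1 := by
    exact_mod_cast (ZMod.natCast_eq_natCast_iff _ _ _).2 (h.of_dvd n.minFac_dvd)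
  have h2 : (2 : ZMod p) ≠ 0 := fun h0 ↦ by simp [h0, hn] at h2n
  have hcop : n.gcd (p - 1) = 1 :=
    Nat.gcd_eq_one_of_lt_minFac (Nat.sub_ne_zero_of_lt hp.one_lt) (Nat.sub_lt hp.pos one_pos)
  have h21 : (2 : ZMod p) ^ n.gcd (p - 1) = 1 :=
    pow_gcd_eq_one.2 ⟨h2n, ZMod.pow_card_sub_one_eq_one h2⟩
  rw [hcop, pow_one] at h21
  exact one_ne_zero (by linear_combination h21 : (1 : ZMod p) = 0)

theorem SemiconjBy.pow_pow {M : Type*} [Monoid M] {c x : M} {m : ℕ}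
    (h : SemiconjBy c (x ^ m) x) (k : ℕ) : SemiconjBy (c ^ k) (x ^ m ^ k) x := by
  induction k with
  | zero => simp
  | succ k ih =>
    rw [pow_succ c, pow_succ', pow_mul]
    exact ih.mul_left (h.pow_right _)

theorem eq_one_of_semiconjBy_sq {M : Type*} [Monoid M] {c x : M} (hx : IsOfFinOrder x)
    (hc : c ^ orderOf x = 1) (h : SemiconjBy c (x ^ 2) x) : x = 1 := by
  have hfix : x ^ 2 ^ orderOf x = x ^ 1 := by
    simpa [SemiconjBy, hc] using h.pow_pow (orderOf x)
  rw [← orderOf_eq_one_iff]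
  exact Nat.eq_one_of_two_pow_modEq_one hx.orderOf_pos.ne' (hx.pow_eq_pow_iff_modEq.1 hfix)

theorem baumslag_semiconjBy : SemiconjBy (bgT⁻¹ * bgA * bgT) (bgA ^ 2) bgA := by
  have hrel : (bgT⁻¹ * bgA * bgT)⁻¹ * bgA * (bgT⁻¹ * bgA * bgT) * (bgA ^ 2)⁻¹ = 1 :=
    PresentedGroup.one_of_mem rfl
  rw [mul_inv_eq_one, mul_assoc, inv_mul_eq_iff_eq_mul] at hrel
  exact hrel.symm

theorem stmt_2_general (F : Type) [Group F] [Finite F] (φ : Baumslag →* F) : φ bgA = 1 := by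
  have hrel := baumslag_semiconjBy.map φ
  rw [map_pow] at hrel
  refine eq_one_of_semiconjBy_sq (isOfFinOrder_of_finite _) ?_ hrel
  have hconj : SemiconjBy bgT⁻¹ bgA (bgT⁻¹ * bgA * bgT) := by simp [SemiconjBy, mul_assoc]
  rw [(hconj.map φ).orderOf_eq]
  exact pow_orderOf_eq_one _

theorem stmt_2 (F : Type) [Group F] [Finite F] (φ : Baumslag →* F)
    (hφ : Function.Surjective φ) : φ bgA = 1 :=
  stmt_2_general F φ
end

section
/- Every finite quotient of the Baumslag group G = ⟨a, t | (t⁻¹at)⁻¹ a (t⁻¹at) = a²⟩ is cyclic, generated by the image of t. -/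
/-!
Let `x` be the image of `a` in a finite quotient and `n` its order. The relation says that
`z = t⁻¹xt` conjugates `x` to `x²`; since `z` is conjugate to `x`, `z ^ n = 1`, so conjugating by
`z ^ n` gives `x = x ^ 2 ^ n`, i.e. `2 ^ n ≡ 1 [MOD n]`. This forces `n = 1`: for the least prime
factor `p` of `n`, the order of `2` mod `p` divides both `n` and `p - 1`, which are coprime.
So `a` dies in every finite quotient, which is then generated by the image of `t`.
-/

theorem conj_eq_pow_pow_of_conj_eq_pow {G : Type*} [Group G] {x z : G} {m : ℕ}
    (h : z⁻¹ * x * z = x ^ m) (k : ℕ) : (z ^ k)⁻¹ * x * z ^ k = x ^ m ^ k := by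
  induction k with
  | zero => simp
  | succ k ih =>
    calc (z ^ (k + 1))⁻¹ * x * z ^ (k + 1) = z⁻¹ * ((z ^ k)⁻¹ * x * z ^ k) * z := by group
      _ = (z⁻¹ * x * z) ^ m ^ k := by rw [ih]; simpa using (conj_pow (a := z⁻¹)).symm
      _ = x ^ m ^ (k + 1) := by rw [h, ← pow_mul, pow_succ']

theorem ZMod.eq_one_of_pow_minFac_eq_one {n : ℕ} (hn : n ≠ 0) {a : ZMod n.minFac}
    (h : a ^ n = 1) : a = 1 := by
  rcases eq_or_ne n 1 with rfl | hn1
  · have : Subsingleton (ZMod (Nat.minFac 1)) := by rw [Nat.minFac_one]; infer_instance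
    exact Subsingleton.elim _ _
  have hp : Fact n.minFac.Prime := ⟨Nat.minFac_prime hn1⟩
  have ha : a ≠ 0 := by
    rintro rfl
    simp [zero_pow hn] at h
  refine orderOf_eq_one_iff.mp (Nat.eq_one_of_dvd_coprimes ?_ (orderOf_dvd_of_pow_eq_one h)
    (orderOf_dvd_of_pow_eq_one (ZMod.pow_card_sub_one_eq_one ha)))
  have := hp.out.one_lt
  exact Nat.coprime_of_lt_minFac (by omega) (by omega)

theorem eq_one_of_conj_conj_eq_sq {G : Type*} [Group G] {x y : G} (hx : IsOfFinOrder x)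
    (h : (y⁻¹ * x * y)⁻¹ * x * (y⁻¹ * x * y) = x ^ 2) : x = 1 := by
  have hz : (y⁻¹ * x * y) ^ orderOf x = 1 := by
    simpa [pow_orderOf_eq_one] using conj_pow (a := y⁻¹) (b := x) (i := orderOf x)
  have hfix : x ^ 2 ^ orderOf x = x ^ 1 := by
    rw [← conj_eq_pow_pow_of_conj_eq_pow h, hz]; group
  exact orderOf_eq_one_iff.mp <|
    Nat.eq_one_of_two_pow_modEq_one hx.orderOf_pos.ne' (pow_eq_pow_iff_modEq.mp hfix)

theorem baumslag_rel : (bgT⁻¹ * bgA * bgT)⁻¹ * bgA * (bgT⁻¹ * bgA * bgT) = bgA ^ 2 :=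
  PresentedGroup.mk_eq_mk_of_mul_inv_mem rfl

theorem stmt_3 (F : Type) [Group F] [Finite F] (φ : Baumslag →* F)
    (hφ : Function.Surjective φ) : Subgroup.zpowers (φ bgT) = ⊤ := by
  have ha : φ bgA = 1 :=
    eq_one_of_conj_conj_eq_sq (isOfFinOrder_of_finite _) (y := φ bgT) (by
      simpa using congrArg φ baumslag_rel)
  refine eq_top_iff.mpr fun f _ => ?_
  obtain ⟨g, rfl⟩ := hφ f
  refine PresentedGroup.generated_by baumslagRels ((Subgroup.zpowers (φ bgT)).comap φ) ?_ g
  intro j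
  fin_cases j
  · exact Subgroup.mem_comap.mpr (ha ▸ one_mem _)
  · exact Subgroup.mem_zpowers (φ bgT)
end

section
/- Let G be a group generated by a and t, and suppose in every finite quotient of G the images of a and b := t⁻¹at are trivial. Let r be a word in a, b, t whose total t-exponent is 1. Then K = G/⟨⟨r⟩⟩ has no nontrivial finite quotients. -/
/-! A homomorphism `φ` from `G` to a finite group factors through a finite quotient of `G`, so
it kills `a` and `b`. It then sends the relator `r` to `φ t ^ (∑ (u₁ i - u₂ i)) = φ t`; if `φ`
factors through `K`, then `φ r = 1`, so `φ` also kills `t`, hence all of `G = ⟨a, t⟩`. -/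

open Function

theorem map_eq_one_of_forall_surjective {G : Type*} [Group G] {x : G}
    (h : ∀ (F : Type) [Group F] [Finite F] (φ : G →* F), Surjective φ → φ x = 1)
    {F : Type} [Group F] [Finite F] (φ : G →* F) : φ x = 1 :=
  congrArg Subtype.val (h φ.range φ.rangeRestrict φ.rangeRestrict_surjective)

theorem list_prod_ofFn_zpow {F : Type*} [Group F] (x : F) :
    ∀ {l : ℕ} (n : Fin l → ℤ), (List.ofFn fun i => x ^ n i).prod = x ^ ∑ i, n i
  | 0, _ => by simp
  | _ + 1, n => by
    rw [List.ofFn_succ, List.prod_cons, list_prod_ofFn_zpow x, Fin.sum_univ_succ, zpow_add]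

theorem map_list_prod_ofFn_eq_zpow_of_map_eq_one {G F : Type*} [Group G] [Group F]
    {a b : G} (t : G) {l : ℕ} (u₁ u₂ : Fin l → ℤ) (φ : G →* F) (ha : φ a = 1) (hb : φ b = 1) :
    φ (List.ofFn fun i => b * t ^ u₁ i * a * t ^ (-u₂ i)).prod = φ t ^ ∑ i, (u₁ i - u₂ i) := by
  rw [map_list_prod, List.map_ofFn, ← list_prod_ofFn_zpow]
  congr 2 with i
  simp [ha, hb, sub_eq_add_neg, zpow_add]

theorem stmt_12_general (G : Type*) [Group G] (a t : G)
    (hgen : Subgroup.closure ({a, t} : Set G) = ⊤)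
    (b : G)
    (hfin : ∀ (F : Type) [Group F] [Finite F] (φ : G →* F),
      Function.Surjective φ → φ a = 1 ∧ φ b = 1)
    (l : ℕ) (u₁ u₂ : Fin l → ℤ)
    (hsum : (∑ i, (u₁ i - u₂ i)) = 1)
    (r : G)
    (hr : r = (List.ofFn fun i : Fin l => b * t ^ u₁ i * a * t ^ (-u₂ i)).prod)
    (K : Type*) [Group K] (π : G →* K)
    (hπ : Function.Surjective π) (hker : π.ker = Subgroup.normalClosure {r}) :
    ∀ (F : Type) [Group F] [Finite F] (ψ : K →* F) (k : K), ψ k = 1 := by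
  intro F _ _ ψ
  suffices hψπ : ψ.comp π = 1 by
    intro k
    obtain ⟨g, rfl⟩ := hπ k
    exact DFunLike.congr_fun hψπ g
  set φ := ψ.comp π
  have ha : φ a = 1 := map_eq_one_of_forall_surjective (fun F _ _ φ hφ => (hfin F φ hφ).1) φ
  have hb : φ b = 1 := map_eq_one_of_forall_surjective (fun F _ _ φ hφ => (hfin F φ hφ).2) φ
  have hπr : π r = 1 := (hker ▸ Subgroup.subset_normalClosure rfl : r ∈ π.ker)
  have ht : φ t = 1 := by
    have hφr : φ r = 1 := by simp [φ, hπr]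
    rwa [hr, map_list_prod_ofFn_eq_zpow_of_map_eq_one t u₁ u₂ φ ha hb, hsum, zpow_one] at hφr
  refine MonoidHom.eq_of_eqOn_dense hgen ?_
  rintro x (rfl | rfl) <;> assumption

/-- Let `G` be generated by `a, t`, with `b = t⁻¹ a t`, and suppose the images of `a`
and `b` vanish in every finite quotient of `G`.  If `r = b t^{u₁ 0} a t^{-u₂ 0} ⋯
b t^{u₁ (l-1)} a t^{-u₂ (l-1)}` has total `t`-exponent `1`, then the quotient of `G` by
the normal closure of `r` has no nontrivial finite quotients. -/
theorem stmt_12 (G : Type*) [Group G] (a t : G)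
    (hgen : Subgroup.closure ({a, t} : Set G) = ⊤)
    (b : G) (hb : b = t⁻¹ * a * t)
    (hfin : ∀ (F : Type) [Group F] [Finite F] (φ : G →* F),
      Function.Surjective φ → φ a = 1 ∧ φ b = 1)
    (l : ℕ) (u₁ u₂ : Fin l → ℤ)
    (hsum : (∑ i, (u₁ i - u₂ i)) = 1)
    (r : G)
    (hr : r = (List.ofFn fun i : Fin l => b * t ^ u₁ i * a * t ^ (-u₂ i)).prod)
    (K : Type*) [Group K] (π : G →* K)
    (hπ : Function.Surjective π) (hker : π.ker = Subgroup.normalClosure {r}) :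
    ∀ (F : Type) [Group F] [Finite F] (ψ : K →* F) (k : K), ψ k = 1 :=
  stmt_12_general G a t hgen b hfin l u₁ u₂ hsum r hr K π hπ hker
end

section
/- Higman's group ⟨a, b, c, d | b⁻¹ab = a², c⁻¹bc = b², d⁻¹cd = c², a⁻¹da = d²⟩ has no nontrivial finite quotients. -/
/-!
If `x⁻¹ y x = y²` in a finite group, conjugating `orderOf x` times gives `y ^ 2 ^ orderOf x = y`,
so `orderOf y ∣ 2 ^ orderOf x - 1`. If a prime `p` divides `2 ^ n - 1` with `n > 0`, some prime
factor of `n` is smaller than `p`: one dividing the order of `2` modulo `p`, which divides both `n`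
and `p - 1`. The images of the four generators are linked cyclically in this way, so the smallest
prime dividing one of their orders cannot exist, and all four images are trivial.
-/

/-- Relators of Higman's group on generators `a = 0, b = 1, c = 2, d = 3`:
`b⁻¹ab a⁻²`, `c⁻¹bc b⁻²`, `d⁻¹cd c⁻²`, `a⁻¹da d⁻²`. -/
def higmanRels : Set (FreeGroup (Fin 4)) :=
  { (FreeGroup.of 1)⁻¹ * FreeGroup.of 0 * FreeGroup.of 1 * (FreeGroup.of 0 ^ 2)⁻¹,
    (FreeGroup.of 2)⁻¹ * FreeGroup.of 1 * FreeGroup.of 2 * (FreeGroup.of 1 ^ 2)⁻¹,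
    (FreeGroup.of 3)⁻¹ * FreeGroup.of 2 * FreeGroup.of 3 * (FreeGroup.of 2 ^ 2)⁻¹,
    (FreeGroup.of 0)⁻¹ * FreeGroup.of 3 * FreeGroup.of 0 * (FreeGroup.of 3 ^ 2)⁻¹ }

abbrev HigmanGroup : Type := PresentedGroup higmanRels

lemma Nat.exists_prime_lt_dvd_of_dvd_two_pow_sub_one {p n : ℕ} (hp : p.Prime) (hn : 0 < n)
    (hpn : p ∣ 2 ^ n - 1) : ∃ q, q.Prime ∧ q ∣ n ∧ q < p := by
  have : Fact p.Prime := ⟨hp⟩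
  have h2n : (2 : ZMod p) ^ n = 1 := by
    have := (Nat.modEq_iff_dvd' Nat.one_le_two_pow).mpr hpn
    exact_mod_cast ((ZMod.natCast_eq_natCast_iff _ _ _).mpr this).symm
  have h2 : (2 : ZMod p) ≠ 0 := ne_zero_pow hn.ne' (h2n ▸ one_ne_zero)
  have hdn : orderOf (2 : ZMod p) ∣ n := orderOf_dvd_of_pow_eq_one h2n
  have hdp : orderOf (2 : ZMod p) ∣ p - 1 := ZMod.orderOf_dvd_card_sub_one h2
  have hd1 : orderOf (2 : ZMod p) ≠ 1 := by
    rw [Ne, orderOf_eq_one_iff]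
    intro h21
    exact one_ne_zero (by linear_combination h21 : (1 : ZMod p) = 0)
  refine ⟨_, Nat.minFac_prime hd1, (Nat.minFac_dvd _).trans hdn, ?_⟩
  calc (orderOf (2 : ZMod p)).minFac ≤ orderOf (2 : ZMod p) :=
        Nat.minFac_le (Nat.pos_of_dvd_of_pos hdn hn)
    _ ≤ p - 1 := Nat.le_of_dvd (Nat.sub_pos_of_lt hp.one_lt) hdp
    _ < p := Nat.sub_lt hp.pos one_pos

lemma Nat.eq_one_of_forall_exists_dvd_two_pow_sub_one {S : Set ℕ} (hS : ∀ n ∈ S, 0 < n)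
    (h : ∀ m ∈ S, ∃ n ∈ S, m ∣ 2 ^ n - 1) {m : ℕ} (hm : m ∈ S) : m = 1 := by
  suffices ∀ p, p.Prime → ∀ m ∈ S, ¬p ∣ m from
    Nat.eq_one_iff_not_exists_prime_dvd.mpr fun p hp => this p hp m hm
  intro p
  induction p using Nat.strong_induction_on with
  | _ p ih =>
    intro hp m hm hpm
    obtain ⟨n, hn, hmn⟩ := h m hm
    obtain ⟨q, hq, hqn, hqp⟩ :=
      Nat.exists_prime_lt_dvd_of_dvd_two_pow_sub_one hp (hS n hn) (hpm.trans hmn)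
    exact ih q hqp hq n hn hqn

section ConjEqSq

variable {G : Type*} [Group G] {x y : G}

lemma pow_two_pow_eq_of_inv_mul_mul_eq_sq (h : x⁻¹ * y * x = y ^ 2) (k : ℕ) :
    y ^ 2 ^ k = x⁻¹ ^ k * y * x ^ k := by
  induction k with
  | zero => simp
  | succ k ih =>
    calc y ^ 2 ^ (k + 1) = (x⁻¹ * y * x⁻¹⁻¹) ^ 2 ^ k := by rw [inv_inv, h, ← pow_mul, pow_succ']
      _ = x⁻¹ ^ (k + 1) * y * x ^ (k + 1) := by rw [conj_pow, ih]; group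

lemma orderOf_dvd_two_pow_orderOf_sub_one_of_inv_mul_mul_eq_sq (h : x⁻¹ * y * x = y ^ 2) :
    orderOf y ∣ 2 ^ orderOf x - 1 := by
  have hy : y ^ 2 ^ orderOf x = y := by
    rw [pow_two_pow_eq_of_inv_mul_mul_eq_sq h, inv_pow, pow_orderOf_eq_one]
    group
  apply orderOf_dvd_of_pow_eq_one
  rw [← mul_eq_right (b := y), ← pow_succ, Nat.sub_add_cancel Nat.one_le_two_pow, hy]

lemma eq_one_of_forall_exists_inv_mul_mul_eq_sq [Finite G] {X : Set G}
    (h : ∀ y ∈ X, ∃ x ∈ X, x⁻¹ * y * x = y ^ 2) {y : G} (hy : y ∈ X) : y = 1 := by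
  rw [← orderOf_eq_one_iff]
  refine Nat.eq_one_of_forall_exists_dvd_two_pow_sub_one (S := orderOf '' X) ?_ ?_ ⟨y, hy, rfl⟩
  · rintro _ ⟨z, -, rfl⟩
    exact orderOf_pos z
  · rintro _ ⟨z, hz, rfl⟩
    obtain ⟨x, hx, hxz⟩ := h z hz
    exact ⟨orderOf x, ⟨x, hx, rfl⟩, orderOf_dvd_two_pow_orderOf_sub_one_of_inv_mul_mul_eq_sq hxz⟩

end ConjEqSq

lemma HigmanGroup.inv_mul_mul_eq_sq (i : Fin 4) :
    (PresentedGroup.of (i + 1) : HigmanGroup)⁻¹ * .of i * .of (i + 1) = .of i ^ 2 := by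
  rw [← mul_inv_eq_one]
  fin_cases i <;> exact PresentedGroup.one_of_mem (by simp [higmanRels])

theorem stmt_14 (F : Type) [Group F] [Finite F] (φ : HigmanGroup →* F)
    (g : HigmanGroup) : φ g = 1 := by
  have hgen (i : Fin 4) : φ (.of i) = 1 := by
    refine eq_one_of_forall_exists_inv_mul_mul_eq_sq (X := Set.range fun j => φ (.of j)) ?_
      (Set.mem_range_self i)
    rintro _ ⟨j, rfl⟩
    refine ⟨φ (.of (j + 1)), Set.mem_range_self _, ?_⟩
    simp only [← map_inv, ← map_mul, ← map_pow, HigmanGroup.inv_mul_mul_eq_sq]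
  rw [PresentedGroup.ext (ψ := 1) hgen, MonoidHom.one_apply]
end
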